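/- Let A be a connected graph with at least two cycles and e ∈ E(A). Then e belongs to the kernel ⌊A⌋ of A if and only if every component of A \ e contains a cycle (equivalently, A \ e has no tree component). -/

import Mathlib

open scoped Classical

/-- A finite multigraph: loops and parallel edges allowed. -/
structure Multigraph where
  V : Type
  E : Type
  [fintypeV : Fintype V]
  [fintypeE : Fintype E]
  ends : E → Sym2 V

attribute [instance] Multigraph.fintypeV Multigraph.fintypeE

namespace Multigraph

variable (G : Multigraph)

/-- Vertex support of an edge set: vertices incident to some edge of `X`. -/
noncomputable def supp (X : Finset G.E) : Finset G.V :=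
  Finset.univ.filter (fun v => ∃ e ∈ X, v ∈ G.ends e)

/-- `Δ` of the subgraph induced by the edge set `X`. -/
noncomputable def delta (X : Finset G.E) : ℤ := (X.card : ℤ) - (G.supp X).card

/-- `Δ(G) = |E(G)| - |V(G)|`. -/
noncomputable def deltaG : ℤ := (Fintype.card G.E : ℤ) - (Fintype.card G.V : ℤ)

/-- Degree of `v` in the edge set `X`: loops count twice. -/
noncomputable def degIn (X : Finset G.E) (v : G.V) : ℕ :=
  ∑ e ∈ X, (if G.ends e = s(v, v) then 2 else if v ∈ G.ends e then 1 else 0)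

/-- `u` and `v` are joined by an edge of `X`. -/
def adjIn (X : Finset G.E) (u v : G.V) : Prop := ∃ e ∈ X, G.ends e = s(u, v)

/-- Reachability using only edges of `X`. -/
def reachIn (X : Finset G.E) : G.V → G.V → Prop :=
  Relation.ReflTransGen (G.adjIn X)

/-- The edge set `X` induces a connected subgraph. -/
def ConnSet (X : Finset G.E) : Prop :=
  X.Nonempty ∧ ∀ u ∈ G.supp X, ∀ v ∈ G.supp X, G.reachIn X u v

/-- Edges of the component of the subgraph `(V, X)` containing vertex `v`. -/
noncomputable def compEdges (X : Finset G.E) (v : G.V) : Finset G.E :=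
  X.filter (fun f => ∃ u ∈ G.ends f, G.reachIn X v u)

/-- Vertices of the component of `v` in the graph `(V, X)` (all vertices kept). -/
noncomputable def compVerts (X : Finset G.E) (v : G.V) : Finset G.V :=
  Finset.univ.filter (fun u => G.reachIn X v u)

/-- `C` is (the edge set of) a cycle: connected, every vertex of degree 2. -/
def IsCycleSet (C : Finset G.E) : Prop :=
  G.ConnSet C ∧ ∀ v ∈ G.supp C, G.degIn C v = 2

/-- `T` induces a tree. -/
def IsTreeSet (T : Finset G.E) : Prop := G.ConnSet T ∧ G.delta T = -1

/-- The component of `v` in `(V, X)` is a tree (possibly a single vertex). -/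
def IsTreeCompAt (X : Finset G.E) (v : G.V) : Prop :=
  (G.compEdges X v).card + 1 = (G.compVerts X v).card

/-- The number of tree components of the graph `(V, X)`. -/
noncomputable def treeCount (X : Finset G.E) : ℕ :=
  (((Finset.univ : Finset G.V).filter (fun v => G.IsTreeCompAt X v)).image
    (fun v => G.compVerts X v)).card

/-- The graph `G` has no isolated vertices. -/
def NoIso : Prop := ∀ v : G.V, ∃ e : G.E, v ∈ G.ends e

/-- The graph `G` has no leaves. -/
def NoLeaf : Prop := ∀ v : G.V, G.degIn Finset.univ v ≠ 1

/-- The graph `G` is connected. -/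
def GConn : Prop := Nonempty G.V ∧ ∀ u v : G.V, G.reachIn Finset.univ u v

/-- `G` is a bicycle: connected, leafless, with `Δ(G) = 1`. -/
def IsBicycle : Prop := G.GConn ∧ G.NoLeaf ∧ G.deltaG = 1

/-- One round of deleting all edges incident to a leaf. -/
noncomputable def pruneStep (X : Finset G.E) : Finset G.E :=
  X.filter (fun e => ∀ v ∈ G.ends e, G.degIn X v ≠ 1)

/-- Edge set obtained from `G` by repeatedly deleting leaves until none remain. -/
noncomputable def kernelSet : Finset G.E :=
  G.pruneStep^[Fintype.card G.E] Finset.univ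

/-- `Δ` of the component of `G` containing `v`. -/
noncomputable def compDelta (v : G.V) : ℤ :=
  ((G.compEdges Finset.univ v).card : ℤ) - ((G.compVerts Finset.univ v).card : ℤ)

/-- The core `[G]`: union of the kernels of the components `A` with `Δ(A) ≥ 1`. -/
noncomputable def coreSet : Finset G.E :=
  G.kernelSet.filter (fun e => ∀ v ∈ G.ends e, 1 ≤ G.compDelta v)

/-- `P` is the edge set of an `(x,y)`-path. -/
def IsPathSet (P : Finset G.E) (x y : G.V) : Prop :=
  G.ConnSet P ∧ x ≠ y ∧ x ∈ G.supp P ∧ y ∈ G.supp P ∧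
  G.degIn P x = 1 ∧ G.degIn P y = 1 ∧
  ∀ v ∈ G.supp P, v ≠ x → v ≠ y → G.degIn P v = 2

/-- `C` induces a bicycle subgraph: connected, leafless, `Δ = 1`. -/
def IsBicycleSet (C : Finset G.E) : Prop :=
  G.ConnSet C ∧ (∀ v ∈ G.supp C, G.degIn C v ≠ 1) ∧ G.delta C = 1

/-- Circuits of the `k`-circular matroid `M_k(G)`: minimal nonempty edge sets `C`
with `|C| = |V(G⟨C⟩)| + k`, i.e. `Δ(G⟨C⟩) = k`. -/
def IsCircuitSet (k : ℕ) (C : Finset G.E) : Prop :=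
  (C.Nonempty ∧ G.delta C = (k : ℤ)) ∧
  ∀ D ⊂ C, ¬ (D.Nonempty ∧ G.delta D = (k : ℤ))

/-- Independent sets of `M_k(G)`. -/
def Indep (k : ℕ) (I : Finset G.E) : Prop := ∀ C ⊆ I, ¬ G.IsCircuitSet k C

/-- Bases of `M_k(G)`: maximal independent sets. -/
def IsBase (k : ℕ) (B : Finset G.E) : Prop :=
  G.Indep k B ∧ ∀ B' : Finset G.E, G.Indep k B' → B ⊆ B' → B' = B

/-- The matroid `M_k(G)` is connected: at least two elements and every two
elements lie on a common circuit. -/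
def MConn (k : ℕ) : Prop :=
  2 ≤ Fintype.card G.E ∧
  ∀ a b : G.E, ∃ C : Finset G.E, G.IsCircuitSet k C ∧ a ∈ C ∧ b ∈ C

end Multigraph

/-!
A component with `n` vertices has at least `n - 1` edges, and at least `n` once it contains a
nonempty leafless subgraph; conversely, stripping leaves from a component with at least `n` edges
leaves such a subgraph. So a component of `A \ e` is a tree exactly when it contains no cycle.

If `e` lies in the kernel and is a bridge, the kernel minus `e`, on the side of either end, has at
most one vertex of degree one, hence contains a cycle. If `e` is not a bridge, `A \ e` is
connected and contains one of the two given cycles or, when both pass through `e`, their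
symmetric difference. Conversely, if both ends of `e` are joined in `A \ e` to leafless
subgraphs, pruning removes neither these subgraphs nor the connections to them (a walk through a
leaf must backtrack), so no end of `e` ever becomes a leaf and `e` survives in the kernel.
-/

namespace Multigraph

variable {G : Multigraph}

section Basic

lemma reachIn_symm {X : Finset G.E} {u v : G.V} (h : G.reachIn X u v) : G.reachIn X v u := by
  have : Std.Symm (G.adjIn X) :=
    ⟨fun _ _ ⟨g, hg, hends⟩ => ⟨g, hg, hends.trans Sym2.eq_swap⟩⟩
  exact Relation.ReflTransGen.stdSymm.symm _ _ h

lemma reachIn_trans {X : Finset G.E} {u v w : G.V} (h : G.reachIn X u v)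
    (h' : G.reachIn X v w) : G.reachIn X u w :=
  Relation.ReflTransGen.trans h h'

lemma reachIn_mono {X Y : Finset G.E} (hXY : X ⊆ Y) {u v : G.V} (h : G.reachIn X u v) :
    G.reachIn Y u v :=
  Relation.ReflTransGen.mono (r := G.adjIn X) (p := G.adjIn Y)
    (fun _ _ ⟨g, hg, hends⟩ => ⟨g, hXY hg, hends⟩) _ _ h

lemma reachIn_of_mem_ends {X : Finset G.E} {g : G.E} (hg : g ∈ X) {u w : G.V}
    (hu : u ∈ G.ends g) (hw : w ∈ G.ends g) : G.reachIn X u w := by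
  by_cases huw : u = w
  · exact huw ▸ Relation.ReflTransGen.refl
  · exact Relation.ReflTransGen.single ⟨g, hg, (Sym2.mem_and_mem_iff huw).mp ⟨hu, hw⟩⟩

lemma exists_mem_ends_of_reachIn {X : Finset G.E} {v u : G.V} (h : G.reachIn X v u)
    (hne : u ≠ v) : ∃ g ∈ X, v ∈ G.ends g := by
  rcases Relation.ReflTransGen.cases_head h with rfl | ⟨_, ⟨g, hg, hends⟩, _⟩
  · exact absurd rfl hne
  · exact ⟨g, hg, by simp [hends]⟩

lemma mem_supp_iff {X : Finset G.E} {v : G.V} : v ∈ G.supp X ↔ ∃ g ∈ X, v ∈ G.ends g := by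
  simp [supp]

lemma supp_mono {X Y : Finset G.E} (h : X ⊆ Y) : G.supp X ⊆ G.supp Y := fun _ hv =>
  let ⟨g, hg, hv⟩ := mem_supp_iff.mp hv
  mem_supp_iff.mpr ⟨g, h hg, hv⟩

end Basic

section Degree

noncomputable def incidence (e : G.E) (v : G.V) : ℕ :=
  if G.ends e = s(v, v) then 2 else if v ∈ G.ends e then 1 else 0

lemma degIn_eq_sum_incidence (X : Finset G.E) (v : G.V) :
    G.degIn X v = ∑ e ∈ X, G.incidence e v :=
  rfl

lemma incidence_eq {e : G.E} {a b : G.V} (h : G.ends e = s(a, b)) (v : G.V) :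
    G.incidence e v = (if a = v then 1 else 0) + (if b = v then 1 else 0) := by
  rw [incidence, h]
  by_cases ha : a = v <;> by_cases hb : b = v <;> subst_vars <;> simp [*, eq_comm]

lemma incidence_eq_zero_iff {e : G.E} {v : G.V} : G.incidence e v = 0 ↔ v ∉ G.ends e := by
  unfold incidence
  split_ifs <;> simp_all

lemma incidence_pos {e : G.E} {v : G.V} (hv : v ∈ G.ends e) : 0 < G.incidence e v :=
  Nat.pos_of_ne_zero (incidence_eq_zero_iff.not.mpr (not_not.mpr hv))

lemma sum_incidence (e : G.E) : ∑ v, G.incidence e v = 2 := by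
  obtain ⟨⟨a, b⟩, hab⟩ := (G.ends e).exists_rep
  simp [incidence_eq hab.symm, Finset.sum_add_distrib]

lemma degIn_mono {X Y : Finset G.E} (h : X ⊆ Y) (v : G.V) : G.degIn X v ≤ G.degIn Y v :=
  Finset.sum_le_sum_of_subset h

lemma degIn_pos_iff {X : Finset G.E} {v : G.V} : 0 < G.degIn X v ↔ v ∈ G.supp X := by
  simp [degIn_eq_sum_incidence, Finset.sum_eq_zero_iff, incidence_eq_zero_iff, mem_supp_iff,
    Nat.pos_iff_ne_zero]

lemma two_le_degIn_of_loop {X : Finset G.E} {g : G.E} (hg : g ∈ X) {v : G.V}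
    (hv : G.ends g = s(v, v)) : 2 ≤ G.degIn X v :=
  le_of_eq_of_le (by simp [hv]) (Finset.single_le_sum (fun _ _ => Nat.zero_le _) hg)

lemma two_le_degIn_of_ne {X : Finset G.E} {g h : G.E} (hg : g ∈ X) (hh : h ∈ X) (hgh : g ≠ h)
    {v : G.V} (hvg : v ∈ G.ends g) (hvh : v ∈ G.ends h) : 2 ≤ G.degIn X v := by
  have hg1 := incidence_pos hvg
  have hh1 := incidence_pos hvh
  calc 2 ≤ ∑ e ∈ {g, h}, G.incidence e v := by rw [Finset.sum_pair hgh]; omega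
    _ ≤ G.degIn X v := Finset.sum_le_sum_of_subset (by simp [Finset.insert_subset_iff, hg, hh])

lemma eq_of_degIn_eq_one {X : Finset G.E} {v : G.V} (hv : G.degIn X v = 1) {g h : G.E}
    (hg : g ∈ X) (hh : h ∈ X) (hvg : v ∈ G.ends g) (hvh : v ∈ G.ends h) : g = h := by
  by_contra hgh
  have := two_le_degIn_of_ne hg hh hgh hvg hvh
  omega

lemma degIn_erase_add_incidence {X : Finset G.E} {e : G.E} (he : e ∈ X) (v : G.V) :
    G.degIn (X.erase e) v + G.incidence e v = G.degIn X v :=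
  Finset.sum_erase_add _ _ he

lemma degIn_eq_of_subset {X Y : Finset G.E} (hYX : Y ⊆ X) {v : G.V}
    (h : ∀ g ∈ X, v ∈ G.ends g → g ∈ Y) : G.degIn Y v = G.degIn X v :=
  Finset.sum_subset hYX fun g hgX hgY =>
    incidence_eq_zero_iff.mpr fun hv => hgY (h g hgX hv)

lemma sum_degIn_supp (X : Finset G.E) : ∑ v ∈ G.supp X, G.degIn X v = 2 * X.card := by
  rw [Finset.sum_subset (Finset.subset_univ _) fun v _ hv =>
    Nat.eq_zero_of_not_pos (degIn_pos_iff.not.mpr hv)]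
  simp only [degIn_eq_sum_incidence]
  rw [Finset.sum_comm]
  simp [sum_incidence, mul_comm]

lemma card_supp_le_card_of_two_le_degIn {X : Finset G.E} (x : G.V)
    (h : ∀ u ∈ G.supp X, u ≠ x → 2 ≤ G.degIn X u) : (G.supp X).card ≤ X.card := by
  have hrest : 2 * ((G.supp X).erase x).card ≤ ∑ u ∈ (G.supp X).erase x, G.degIn X u := by
    rw [mul_comm, ← smul_eq_mul, ← Finset.sum_const]
    exact Finset.sum_le_sum fun u hu => h u (Finset.mem_of_mem_erase hu) (Finset.ne_of_mem_erase hu)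
  by_cases hx : x ∈ G.supp X
  · have hsum := Finset.add_sum_erase _ (G.degIn X) hx
    have := Finset.card_erase_add_one hx
    have := degIn_pos_iff.mpr hx
    have := sum_degIn_supp X
    omega
  · rw [Finset.erase_eq_of_notMem hx] at hrest
    have := sum_degIn_supp X
    omega

end Degree

def IsLeaflessSet (C : Finset G.E) : Prop := ∀ u ∈ G.supp C, 2 ≤ G.degIn C u

section Leafless

lemma IsCycleSet.isLeaflessSet {C : Finset G.E} (hC : G.IsCycleSet C) : G.IsLeaflessSet C :=
  fun u hu => (hC.2 u hu).ge

lemma IsCycleSet.even_degIn {C : Finset G.E} (hC : G.IsCycleSet C) (u : G.V) :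
    Even (G.degIn C u) := by
  by_cases hu : u ∈ G.supp C
  · exact ⟨1, hC.2 u hu⟩
  · exact ⟨0, Nat.eq_zero_of_not_pos (degIn_pos_iff.not.mpr hu)⟩

lemma isLeaflessSet_of_even {C : Finset G.E} (hC : ∀ u, Even (G.degIn C u)) :
    G.IsLeaflessSet C := fun u hu => by
  have := degIn_pos_iff.mpr hu
  obtain ⟨k, hk⟩ := hC u
  omega

lemma even_degIn_symmDiff {C₁ C₂ : Finset G.E} {u : G.V} (h₁ : Even (G.degIn C₁ u))
    (h₂ : Even (G.degIn C₂ u)) : Even (G.degIn (symmDiff C₁ C₂) u) := by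
  have hsplit : G.degIn (symmDiff C₁ C₂) u + 2 * G.degIn (C₁ ∩ C₂) u =
      G.degIn C₁ u + G.degIn C₂ u := by
    have hdisj : Disjoint (symmDiff C₁ C₂) (C₁ ∩ C₂) := by
      simpa using disjoint_symmDiff_inf C₁ C₂
    have hunion : symmDiff C₁ C₂ ∪ (C₁ ∩ C₂) = C₁ ∪ C₂ := by
      simpa using symmDiff_sup_inf C₁ C₂
    simp only [degIn_eq_sum_incidence]
    rw [← Finset.sum_union_inter, ← hunion, Finset.sum_union hdisj]
    ring
  obtain ⟨a, ha⟩ := h₁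
  obtain ⟨b, hb⟩ := h₂
  exact ⟨a + b - G.degIn (C₁ ∩ C₂) u, by omega⟩

lemma exists_isLeaflessSet_not_mem
    (h2 : ∃ C₁ C₂ : Finset G.E, G.IsCycleSet C₁ ∧ G.IsCycleSet C₂ ∧ C₁ ≠ C₂)
    (e : G.E) : ∃ C : Finset G.E, e ∉ C ∧ C.Nonempty ∧ G.IsLeaflessSet C := by
  obtain ⟨C₁, C₂, h₁, h₂, hne⟩ := h2
  by_cases he₁ : e ∈ C₁
  · by_cases he₂ : e ∈ C₂
    · exact ⟨symmDiff C₁ C₂, by simp [Finset.mem_symmDiff, he₁, he₂],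
        Finset.symmDiff_nonempty.mpr hne,
        isLeaflessSet_of_even fun u =>
          even_degIn_symmDiff (h₁.even_degIn u) (h₂.even_degIn u)⟩
    · exact ⟨C₂, he₂, h₂.1.1, h₂.isLeaflessSet⟩
  · exact ⟨C₁, he₁, h₁.1.1, h₁.isLeaflessSet⟩

/-- Stripping leaves one at a time keeps `|supp| ≤ |edges|`, so it cannot empty the graph. -/
lemma exists_isLeaflessSet_subset {D : Finset G.E} (hcard : (G.supp D).card ≤ D.card)
    (hne : D.Nonempty) : ∃ C ⊆ D, C.Nonempty ∧ G.IsLeaflessSet C := by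
  induction D using Finset.strongInduction with
  | _ D ih =>
  by_cases hD : G.IsLeaflessSet D
  · exact ⟨D, subset_rfl, hne, hD⟩
  obtain ⟨u, hu, hdeg⟩ : ∃ u ∈ G.supp D, G.degIn D u < 2 := by
    simpa [IsLeaflessSet] using hD
  have hleaf : G.degIn D u = 1 := by have := degIn_pos_iff.mpr hu; omega
  obtain ⟨g, hg, hug⟩ := mem_supp_iff.mp hu
  obtain ⟨w, hends⟩ := Sym2.mem_iff_exists.mp hug
  have hwu : w ≠ u := by
    rintro rfl
    have := two_le_degIn_of_loop hg hends
    omega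
  have hsupp : G.supp (D.erase g) ⊆ (G.supp D).erase u := fun t ht => by
    obtain ⟨h, hh, hth⟩ := mem_supp_iff.mp ht
    refine Finset.mem_erase.mpr ⟨?_, supp_mono (Finset.erase_subset _ _) ht⟩
    rintro rfl
    exact Finset.ne_of_mem_erase hh
      (eq_of_degIn_eq_one hleaf (Finset.mem_of_mem_erase hh) hg hth hug)
  have huw : {u, w} ⊆ G.supp D := by
    simp only [Finset.insert_subset_iff, Finset.singleton_subset_iff]
    exact ⟨hu, mem_supp_iff.mpr ⟨g, hg, by simp [hends]⟩⟩
  have h2 := Finset.card_le_card huw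
  rw [Finset.card_pair hwu.symm] at h2
  have h3 := Finset.card_le_card hsupp
  have h4 := Finset.card_erase_add_one hg
  have h5 := Finset.card_erase_add_one hu
  obtain ⟨C, hC, hCne, hCleaf⟩ := ih (D.erase g) (Finset.erase_ssubset hg) (by omega)
    (Finset.card_pos.mp (by omega))
  exact ⟨C, hC.trans (Finset.erase_subset _ _), hCne, hCleaf⟩

end Leafless

section Component

lemma mem_compEdges_iff {X : Finset G.E} {v : G.V} {g : G.E} :
    g ∈ G.compEdges X v ↔ g ∈ X ∧ ∃ u ∈ G.ends g, G.reachIn X v u := by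
  simp [compEdges]

lemma mem_compVerts_iff {X : Finset G.E} {v u : G.V} :
    u ∈ G.compVerts X v ↔ G.reachIn X v u := by
  simp [compVerts]

lemma compEdges_subset (X : Finset G.E) (v : G.V) : G.compEdges X v ⊆ X :=
  Finset.filter_subset _ _

lemma compEdges_mono {X Y : Finset G.E} (h : X ⊆ Y) (v : G.V) :
    G.compEdges X v ⊆ G.compEdges Y v := fun g hg => by
  obtain ⟨hgX, u, hu, hvu⟩ := mem_compEdges_iff.mp hg
  exact mem_compEdges_iff.mpr ⟨h hgX, u, hu, reachIn_mono h hvu⟩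

lemma reachIn_of_mem_compEdges {X : Finset G.E} {v : G.V} {g : G.E}
    (hg : g ∈ G.compEdges X v) {u : G.V} (hu : u ∈ G.ends g) : G.reachIn X v u := by
  obtain ⟨hgX, t, ht, hvt⟩ := mem_compEdges_iff.mp hg
  exact reachIn_trans hvt (reachIn_of_mem_ends hgX ht hu)

lemma exists_ends_of_mem_compEdges {X : Finset G.E} {v : G.V} {f : G.E}
    (hf : f ∈ G.compEdges X v) : ∃ a b, G.ends f = s(a, b) ∧ G.reachIn X v a := by
  obtain ⟨⟨a, b⟩, hab⟩ := (G.ends f).exists_rep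
  exact ⟨a, b, hab.symm, reachIn_of_mem_compEdges hf (by simp [← hab])⟩

lemma compVerts_eq_of_reachIn {X : Finset G.E} {v w : G.V} (h : G.reachIn X v w) :
    G.compVerts X v = G.compVerts X w := by
  ext u
  simp only [mem_compVerts_iff]
  exact ⟨reachIn_trans (reachIn_symm h), reachIn_trans h⟩

lemma compEdges_eq_of_reachIn {X : Finset G.E} {v w : G.V} (h : G.reachIn X v w) :
    G.compEdges X v = G.compEdges X w := by
  ext g
  simp only [mem_compEdges_iff]
  exact and_congr_right fun _ => exists_congr fun u => and_congr_right fun _ =>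
    ⟨reachIn_trans (reachIn_symm h), reachIn_trans h⟩

lemma supp_compEdges_subset_compVerts (X : Finset G.E) (v : G.V) :
    G.supp (G.compEdges X v) ⊆ G.compVerts X v := fun u hu => by
  obtain ⟨g, hg, hu⟩ := mem_supp_iff.mp hu
  exact mem_compVerts_iff.mpr (reachIn_of_mem_compEdges hg hu)

lemma mem_supp_compEdges {X : Finset G.E} {v u : G.V} (h : G.reachIn X v u) (hne : u ≠ v) :
    u ∈ G.supp (G.compEdges X v) := by
  rcases Relation.ReflTransGen.cases_tail h with rfl | ⟨c, hvc, g, hg, hends⟩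
  · exact absurd rfl hne
  · exact mem_supp_iff.mpr ⟨g, mem_compEdges_iff.mpr ⟨hg, c, by simp [hends], hvc⟩,
      by simp [hends]⟩

lemma compVerts_subset_insert_supp (X : Finset G.E) (v : G.V) :
    G.compVerts X v ⊆ insert v (G.supp (G.compEdges X v)) := fun u hu => by
  by_cases huv : u = v
  · exact huv ▸ Finset.mem_insert_self _ _
  · exact Finset.mem_insert_of_mem (mem_supp_compEdges (mem_compVerts_iff.mp hu) huv)

lemma compVerts_subset_supp {X : Finset G.E} {v : G.V} (h : (G.compEdges X v).Nonempty) :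
    G.compVerts X v ⊆ G.supp (G.compEdges X v) := by
  suffices hv : v ∈ G.supp (G.compEdges X v) from
    (compVerts_subset_insert_supp X v).trans (Finset.insert_subset hv subset_rfl)
  obtain ⟨f, hf⟩ := h
  obtain ⟨a, b, hends, hva⟩ := exists_ends_of_mem_compEdges hf
  by_cases hav : v = a
  · exact mem_supp_iff.mpr ⟨f, hf, by simp [hends, hav]⟩
  · rw [compEdges_eq_of_reachIn hva]
    exact mem_supp_compEdges (reachIn_symm hva) hav

lemma disjoint_compVerts {X : Finset G.E} {v w : G.V} (h : ¬ G.reachIn X v w) :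
    Disjoint (G.compVerts X v) (G.compVerts X w) :=
  Finset.disjoint_left.mpr fun _ hv hw =>
    h (reachIn_trans (mem_compVerts_iff.mp hv) (reachIn_symm (mem_compVerts_iff.mp hw)))

lemma disjoint_compEdges {X : Finset G.E} {v w : G.V} (h : ¬ G.reachIn X v w) :
    Disjoint (G.compEdges X v) (G.compEdges X w) :=
  Finset.disjoint_left.mpr fun g hv hw => by
    obtain ⟨_, u, hu, _⟩ := mem_compEdges_iff.mp hv
    exact h (reachIn_trans (reachIn_of_mem_compEdges hv hu)
      (reachIn_symm (reachIn_of_mem_compEdges hw hu)))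

lemma IsLeaflessSet.inter_compEdges {X C : Finset G.E} (hC : G.IsLeaflessSet C) (hCX : C ⊆ X)
    (w : G.V) : G.IsLeaflessSet (C ∩ G.compEdges X w) := fun u hu => by
  obtain ⟨g, hg, hug⟩ := mem_supp_iff.mp hu
  have hwu := reachIn_of_mem_compEdges (Finset.mem_inter.mp hg).2 hug
  rw [degIn_eq_of_subset Finset.inter_subset_left fun h hh huh =>
    Finset.mem_inter.mpr ⟨hh, mem_compEdges_iff.mpr ⟨hCX hh, u, huh, hwu⟩⟩]
  exact hC u (supp_mono Finset.inter_subset_left hu)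

end Component

section DeleteEdge

variable {X : Finset G.E} {f : G.E} {a b : G.V}

lemma reachIn_erase_or (hf : G.ends f = s(a, b)) {v u : G.V} (h : G.reachIn X v u) :
    G.reachIn (X.erase f) v u ∨ G.reachIn (X.erase f) a u ∨ G.reachIn (X.erase f) b u := by
  induction h with
  | refl => exact Or.inl Relation.ReflTransGen.refl
  | @tail p q _ hpq ih =>
    obtain ⟨g, hg, hends⟩ := hpq
    by_cases hgf : g = f
    · rw [hgf, hf] at hends
      rcases Sym2.eq_iff.mp hends with ⟨-, rfl⟩ | ⟨rfl, -⟩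
      exacts [Or.inr (Or.inr .refl), Or.inr (Or.inl .refl)]
    · have hstep : G.adjIn (X.erase f) p q := ⟨g, Finset.mem_erase.mpr ⟨hgf, hg⟩, hends⟩
      exact ih.imp (·.tail hstep) (Or.imp (·.tail hstep) (·.tail hstep))

lemma reachIn_erase_iff (hf : G.ends f = s(a, b)) (hab : G.reachIn (X.erase f) a b)
    {v u : G.V} : G.reachIn (X.erase f) v u ↔ G.reachIn X v u := by
  refine ⟨reachIn_mono (Finset.erase_subset f X), fun h => ?_⟩
  have hends_u : G.reachIn (X.erase f) v u ∨ G.reachIn (X.erase f) a u :=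
    (reachIn_erase_or hf h).imp_right (Or.elim · id (reachIn_trans hab ·))
  have hends_v : G.reachIn (X.erase f) u v ∨ G.reachIn (X.erase f) a v :=
    (reachIn_erase_or hf (reachIn_symm h)).imp_right
      (Or.elim · id (reachIn_trans hab ·))
  rcases hends_u with hvu | hau
  · exact hvu
  rcases hends_v with huv | hav
  · exact reachIn_symm huv
  · exact reachIn_trans (reachIn_symm hav) hau

lemma compVerts_erase (hf : G.ends f = s(a, b)) (hab : G.reachIn (X.erase f) a b) (v : G.V) :
    G.compVerts (X.erase f) v = G.compVerts X v := by
  ext u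
  simp only [mem_compVerts_iff, reachIn_erase_iff hf hab]

lemma compEdges_erase (hf : G.ends f = s(a, b)) (hab : G.reachIn (X.erase f) a b) (v : G.V) :
    G.compEdges (X.erase f) v = (G.compEdges X v).erase f := by
  ext g
  simp only [mem_compEdges_iff, Finset.mem_erase, reachIn_erase_iff hf hab, and_assoc]

lemma reachIn_iff_of_mem (hfX : f ∈ X) (hf : G.ends f = s(a, b)) {u : G.V} :
    G.reachIn X a u ↔ G.reachIn (X.erase f) a u ∨ G.reachIn (X.erase f) b u := by
  refine ⟨fun h => ?_, fun h => ?_⟩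
  · rcases reachIn_erase_or hf h with h | h | h
    exacts [Or.inl h, Or.inl h, Or.inr h]
  · have hab : G.reachIn X a b := reachIn_of_mem_ends hfX (by simp [hf]) (by simp [hf])
    rcases h with h | h
    exacts [reachIn_mono (Finset.erase_subset f X) h,
      reachIn_trans hab (reachIn_mono (Finset.erase_subset f X) h)]

lemma compVerts_eq_union (hfX : f ∈ X) (hf : G.ends f = s(a, b)) :
    G.compVerts X a = G.compVerts (X.erase f) a ∪ G.compVerts (X.erase f) b := by
  ext u
  simp only [Finset.mem_union, mem_compVerts_iff, reachIn_iff_of_mem hfX hf]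

lemma erase_compEdges_eq_union (hfX : f ∈ X) (hf : G.ends f = s(a, b)) :
    (G.compEdges X a).erase f = G.compEdges (X.erase f) a ∪ G.compEdges (X.erase f) b := by
  ext g
  simp only [Finset.mem_erase, Finset.mem_union, mem_compEdges_iff, reachIn_iff_of_mem hfX hf]
  constructor
  · rintro ⟨hgf, hgX, u, hu, hau | hbu⟩
    exacts [Or.inl ⟨⟨hgf, hgX⟩, u, hu, hau⟩, Or.inr ⟨⟨hgf, hgX⟩, u, hu, hbu⟩]
  · rintro (⟨⟨hgf, hgX⟩, u, hu, hau⟩ | ⟨⟨hgf, hgX⟩, u, hu, hbu⟩)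
    exacts [⟨hgf, hgX, u, hu, Or.inl hau⟩, ⟨hgf, hgX, u, hu, Or.inr hbu⟩]

lemma card_compVerts_eq_add (hfX : f ∈ X) (hf : G.ends f = s(a, b))
    (hab : ¬ G.reachIn (X.erase f) a b) :
    (G.compVerts X a).card =
      (G.compVerts (X.erase f) a).card + (G.compVerts (X.erase f) b).card := by
  rw [compVerts_eq_union hfX hf, Finset.card_union_of_disjoint (disjoint_compVerts hab)]

lemma card_compEdges_eq_add (hfX : f ∈ X) (hf : G.ends f = s(a, b))
    (hab : ¬ G.reachIn (X.erase f) a b) :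
    (G.compEdges X a).card =
      (G.compEdges (X.erase f) a).card + (G.compEdges (X.erase f) b).card + 1 := by
  have hfa : f ∈ G.compEdges X a :=
    mem_compEdges_iff.mpr ⟨hfX, a, by simp [hf], Relation.ReflTransGen.refl⟩
  rw [← Finset.card_erase_add_one hfa, erase_compEdges_eq_union hfX hf,
    Finset.card_union_of_disjoint (disjoint_compEdges hab)]

end DeleteEdge

section Count

theorem card_compVerts_le_card_compEdges_add_one (X : Finset G.E) (v : G.V) :
    (G.compVerts X v).card ≤ (G.compEdges X v).card + 1 := by
  induction X using Finset.strongInduction generalizing v with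
  | _ X ih =>
  rcases (G.compEdges X v).eq_empty_or_nonempty with hE | ⟨f, hf⟩
  · simpa [hE, supp] using Finset.card_le_card (compVerts_subset_insert_supp X v)
  obtain ⟨a, b, hends, hva⟩ := exists_ends_of_mem_compEdges hf
  have hfX := compEdges_subset X v hf
  have ih' := ih (X.erase f) (Finset.erase_ssubset hfX)
  rw [compVerts_eq_of_reachIn hva, compEdges_eq_of_reachIn hva]
  by_cases hab : G.reachIn (X.erase f) a b
  · rw [← compVerts_erase hends hab]
    exact (ih' a).trans
      (Nat.add_le_add_right (Finset.card_le_card (compEdges_mono (Finset.erase_subset f X) a)) 1)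
  · have := ih' a
    have := ih' b
    rw [card_compVerts_eq_add hfX hends hab, card_compEdges_eq_add hfX hends hab]
    omega

theorem card_compVerts_le_card_compEdges {X C : Finset G.E} {v : G.V}
    (hC : C ⊆ G.compEdges X v) (hne : C.Nonempty) (hleaf : G.IsLeaflessSet C) :
    (G.compVerts X v).card ≤ (G.compEdges X v).card := by
  induction X using Finset.strongInduction generalizing v C with
  | _ X ih =>
  by_cases hsub : G.compEdges X v ⊆ C
  · have hEC : G.compEdges X v = C := hsub.antisymm hC
    calc (G.compVerts X v).card ≤ (G.supp C).card :=
          Finset.card_le_card (hEC ▸ compVerts_subset_supp (hEC ▸ hne))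
      _ ≤ C.card := card_supp_le_card_of_two_le_degIn v fun u hu _ => hleaf u hu
      _ = (G.compEdges X v).card := by rw [hEC]
  obtain ⟨f, hf, hfC⟩ := Finset.not_subset.mp hsub
  obtain ⟨a, b, hends, hva⟩ := exists_ends_of_mem_compEdges hf
  have hfX := compEdges_subset X v hf
  rw [compEdges_eq_of_reachIn hva] at hC ⊢
  rw [compVerts_eq_of_reachIn hva]
  have hCf : C ⊆ (G.compEdges X a).erase f := fun g hg =>
    Finset.mem_erase.mpr ⟨ne_of_mem_of_not_mem hg hfC, hC hg⟩
  have hCX : C ⊆ X.erase f := hCf.trans (Finset.erase_subset_erase f (compEdges_subset X a))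
  have hlt := Finset.erase_ssubset hfX
  by_cases hab : G.reachIn (X.erase f) a b
  · rw [← compVerts_erase hends hab]
    exact (ih _ hlt (hCf.trans_eq (compEdges_erase hends hab a).symm) hne hleaf).trans
      (Finset.card_le_card (compEdges_mono (Finset.erase_subset f X) a))
  -- `f` is a bridge: `C` meets one side, and its restriction to that side is still leafless.
  rw [card_compVerts_eq_add hfX hends hab, card_compEdges_eq_add hfX hends hab]
  rw [erase_compEdges_eq_union hfX hends] at hCf
  obtain ⟨g, hg⟩ := hne
  have hside : ∀ s, g ∈ G.compEdges (X.erase f) s →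
      (G.compVerts (X.erase f) s).card ≤ (G.compEdges (X.erase f) s).card := fun s hgs =>
    ih _ hlt Finset.inter_subset_right ⟨g, Finset.mem_inter.mpr ⟨hg, hgs⟩⟩
      (hleaf.inter_compEdges hCX s)
  rcases Finset.mem_union.mp (hCf hg) with hga | hgb
  · have := hside a hga
    have := card_compVerts_le_card_compEdges_add_one (X.erase f) b
    omega
  · have := hside b hgb
    have := card_compVerts_le_card_compEdges_add_one (X.erase f) a
    omega

theorem not_isTreeCompAt_iff {X : Finset G.E} {v : G.V} :
    ¬ G.IsTreeCompAt X v ↔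
      ∃ C ⊆ G.compEdges X v, C.Nonempty ∧ G.IsLeaflessSet C := by
  unfold IsTreeCompAt
  constructor
  · intro htree
    have hle := card_compVerts_le_card_compEdges_add_one X v
    have hv : 0 < (G.compVerts X v).card :=
      Finset.card_pos.mpr ⟨v, mem_compVerts_iff.mpr Relation.ReflTransGen.refl⟩
    have hsupp := Finset.card_le_card (supp_compEdges_subset_compVerts X v)
    exact exists_isLeaflessSet_subset (by omega) (Finset.card_pos.mp (by omega))
  · rintro ⟨C, hC, hne, hleaf⟩
    have := card_compVerts_le_card_compEdges hC hne hleaf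
    omega

end Count

section Kernel

lemma mem_pruneStep_iff {X : Finset G.E} {g : G.E} :
    g ∈ G.pruneStep X ↔ g ∈ X ∧ ∀ v ∈ G.ends g, G.degIn X v ≠ 1 := by
  simp [pruneStep]

lemma pruneStep_subset (X : Finset G.E) : G.pruneStep X ⊆ X :=
  Finset.filter_subset _ _

lemma IsLeaflessSet.subset_pruneStep {C X : Finset G.E} (hC : G.IsLeaflessSet C)
    (hCX : C ⊆ X) : C ⊆ G.pruneStep X := fun g hg =>
  mem_pruneStep_iff.mpr ⟨hCX hg, fun v hv => by
    have := hC v (mem_supp_iff.mpr ⟨g, hg, hv⟩)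
    have := degIn_mono hCX v
    omega⟩

lemma pruneStep_iterate_of_card_le (n : ℕ) {S : Finset G.E} (hS : S.card ≤ n) :
    G.pruneStep (G.pruneStep^[n] S) = G.pruneStep^[n] S := by
  induction n generalizing S with
  | zero => simp [Finset.card_eq_zero.mp (Nat.le_zero.mp hS), pruneStep]
  | succ n ih =>
    by_cases hfix : G.pruneStep S = S
    · rw [Function.iterate_fixed hfix, hfix]
    · have := Finset.card_lt_card ((pruneStep_subset S).ssubset_of_ne hfix)
      rw [Function.iterate_succ_apply]
      exact ih (by omega)

lemma isLeaflessSet_kernelSet : G.IsLeaflessSet G.kernelSet := fun u hu => by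
  have hfix : G.pruneStep G.kernelSet = G.kernelSet :=
    pruneStep_iterate_of_card_le _ Finset.card_univ.le
  obtain ⟨g, hg, hug⟩ := mem_supp_iff.mp hu
  have := (mem_pruneStep_iff.mp (hfix.symm ▸ hg)).2 u hug
  have := degIn_pos_iff.mpr hu
  omega

lemma degIn_ne_one_of_reachIn_inter_pruneStep {W Y : Finset G.E} {p r : G.V}
    (hp : G.degIn W p ≠ 1) (h : G.reachIn (Y ∩ G.pruneStep W) p r) : G.degIn W r ≠ 1 := by
  rcases Relation.ReflTransGen.cases_tail h with rfl | ⟨_, _, g, hg, hends⟩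
  · exact hp
  · exact (mem_pruneStep_iff.mp (Finset.mem_inter.mp hg).2).2 r (by simp [hends])

/-- A walk through a leaf of `W` must leave it along the edge it came in by. -/
lemma reachIn_inter_pruneStep_or {W Y : Finset G.E} (hYW : Y ⊆ W) {p q : G.V}
    (hp : G.degIn W p ≠ 1) (h : G.reachIn Y p q) :
    G.reachIn (Y ∩ G.pruneStep W) p q ∨
      ∃ r, G.reachIn (Y ∩ G.pruneStep W) p r ∧ G.adjIn Y r q ∧ G.degIn W q = 1 := by
  induction h with
  | refl => exact Or.inl .refl
  | @tail r q _ hrq ih =>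
    obtain ⟨g, hg, hends⟩ := hrq
    rcases ih with hpr | ⟨r', hpr', ⟨g', hg', hends'⟩, hleaf⟩
    · by_cases hq : G.degIn W q = 1
      · exact Or.inr ⟨r, hpr, ⟨g, hg, hends⟩, hq⟩
      have hr := degIn_ne_one_of_reachIn_inter_pruneStep hp hpr
      refine Or.inl (hpr.tail ⟨g, Finset.mem_inter.mpr ⟨hg, mem_pruneStep_iff.mpr
        ⟨hYW hg, fun v hv => ?_⟩⟩, hends⟩)
      rw [hends, Sym2.mem_iff] at hv
      rcases hv with rfl | rfl
      exacts [hr, hq]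
    · have hgg' : g = g' := eq_of_degIn_eq_one hleaf (hYW hg) (hYW hg')
        (by simp [hends]) (by simp [hends'])
      rw [hgg', hends'] at hends
      have hqr' : q = r' := by
        rcases Sym2.eq_iff.mp hends with ⟨hr'r, hrq⟩ | ⟨hr'q, -⟩
        exacts [hrq.symm.trans hr'r.symm, hr'q.symm]
      exact Or.inl (hqr' ▸ hpr')

lemma reachIn_inter_pruneStep {W Y : Finset G.E} (hYW : Y ⊆ W) {p q : G.V}
    (hp : G.degIn W p ≠ 1) (hq : G.degIn W q ≠ 1) (h : G.reachIn Y p q) :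
    G.reachIn (Y ∩ G.pruneStep W) p q :=
  (reachIn_inter_pruneStep_or hYW hp h).resolve_right fun ⟨_, _, _, hq1⟩ => hq hq1

/-- The invariant that keeps `e` from ever becoming a leaf edge during pruning. -/
def IsAnchored (W : Finset G.E) (e : G.E) (z : G.V) : Prop :=
  ∃ C ⊆ W, G.IsLeaflessSet C ∧ ∃ w ∈ G.supp C, G.reachIn (W.erase e) z w

variable {W : Finset G.E} {e : G.E} {z : G.V}

lemma isAnchored_of_subset_compEdges {C : Finset G.E} (hC : C ⊆ G.compEdges (W.erase e) z)
    (hne : C.Nonempty) (hleaf : G.IsLeaflessSet C) : G.IsAnchored W e z := by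
  obtain ⟨g, hg⟩ := hne
  have hgW := Finset.mem_of_mem_erase (compEdges_subset _ _ (hC hg))
  exact ⟨C, hC.trans ((compEdges_subset _ _).trans (Finset.erase_subset e W)), hleaf,
    _, mem_supp_iff.mpr ⟨g, hg, (G.ends g).out_fst_mem⟩,
    reachIn_of_mem_compEdges (hC hg) (G.ends g).out_fst_mem⟩

lemma IsAnchored.degIn_ne_one (h : G.IsAnchored W e z) (he : e ∈ W) (hz : z ∈ G.ends e) :
    G.degIn W z ≠ 1 := by
  obtain ⟨C, hCW, hC, w, hw, hzw⟩ := h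
  by_cases hzC : z ∈ G.supp C
  · have := hC z hzC
    have := degIn_mono hCW z
    omega
  · obtain ⟨g, hg, hzg⟩ := exists_mem_ends_of_reachIn hzw fun hwz => hzC (hwz ▸ hw)
    have := two_le_degIn_of_ne (Finset.mem_of_mem_erase hg) he (Finset.ne_of_mem_erase hg) hzg hz
    omega

lemma IsAnchored.pruneStep (h : G.IsAnchored W e z) (he : e ∈ W) (hz : z ∈ G.ends e) :
    G.IsAnchored (G.pruneStep W) e z := by
  have hz1 := h.degIn_ne_one he hz
  obtain ⟨C, hCW, hC, w, hw, hzw⟩ := h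
  have hw1 : G.degIn W w ≠ 1 := by
    have := hC w hw
    have := degIn_mono hCW w
    omega
  refine ⟨C, hC.subset_pruneStep hCW, hC, w, hw, ?_⟩
  have := reachIn_inter_pruneStep (Finset.erase_subset e W) hz1 hw1 hzw
  rwa [Finset.erase_inter, Finset.inter_eq_right.mpr (pruneStep_subset W)] at this

lemma mem_kernelSet_of_isAnchored (h : ∀ z ∈ G.ends e, G.IsAnchored Finset.univ e z) :
    e ∈ G.kernelSet := by
  have key : ∀ n, e ∈ G.pruneStep^[n] Finset.univ ∧
      ∀ z ∈ G.ends e, G.IsAnchored (G.pruneStep^[n] Finset.univ) e z := by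
    intro n
    induction n with
    | zero => exact ⟨Finset.mem_univ e, h⟩
    | succ n ih =>
      obtain ⟨he, hanch⟩ := ih
      rw [Function.iterate_succ_apply']
      exact ⟨mem_pruneStep_iff.mpr ⟨he, fun z hz => (hanch z hz).degIn_ne_one he hz⟩,
        fun z hz => (hanch z hz).pruneStep he hz⟩
  exact (key _).1

lemma exists_isLeaflessSet_subset_compEdges_erase {K : Finset G.E} (hK : G.IsLeaflessSet K)
    (he : e ∈ K) {x y : G.V} (hends : G.ends e = s(x, y))
    (hxy : ¬ G.reachIn (K.erase e) x y) :
    ∃ C ⊆ G.compEdges (K.erase e) x, C.Nonempty ∧ G.IsLeaflessSet C := by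
  have hdeg : ∀ u ∈ G.supp (G.compEdges (K.erase e) x), u ≠ x →
      2 ≤ G.degIn (G.compEdges (K.erase e) x) u := by
    intro u hu hux
    obtain ⟨g, hg, hug⟩ := mem_supp_iff.mp hu
    have hxu := reachIn_of_mem_compEdges hg hug
    have hue : G.incidence e u = 0 := incidence_eq_zero_iff.mpr (by
      simp only [hends, Sym2.mem_iff, not_or]
      exact ⟨hux, fun huy => hxy (huy ▸ hxu)⟩)
    rw [degIn_eq_of_subset (compEdges_subset _ _) fun h hh huh =>
      mem_compEdges_iff.mpr ⟨hh, u, huh, hxu⟩]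
    have := degIn_erase_add_incidence he u
    have := hK u (supp_mono (Finset.erase_subset e K) (supp_mono (compEdges_subset _ _) hu))
    omega
  have hne : (G.compEdges (K.erase e) x).Nonempty := by
    have hx : G.incidence e x = 1 := by
      have hyx : y ≠ x := fun hyx => hxy (hyx ▸ .refl)
      simp [incidence_eq hends, hyx]
    have := degIn_erase_add_incidence he x
    have := hK x (mem_supp_iff.mpr ⟨e, he, by simp [hends]⟩)
    have hpos : 0 < G.degIn (K.erase e) x := by omega
    obtain ⟨g, hg, hxg⟩ := mem_supp_iff.mp (degIn_pos_iff.mp hpos)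
    exact ⟨g, mem_compEdges_iff.mpr ⟨hg, x, hxg, .refl⟩⟩
  exact exists_isLeaflessSet_subset (card_supp_le_card_of_two_le_degIn x hdeg) hne

lemma GConn.exists_reachIn_erase (hconn : G.GConn) (e : G.E) (v : G.V) :
    ∃ z ∈ G.ends e, G.reachIn (Finset.univ.erase e) v z := by
  obtain ⟨⟨a, b⟩, hab⟩ := (G.ends e).exists_rep
  have ha : a ∈ G.ends e := by simp [← hab]
  have hb : b ∈ G.ends e := by simp [← hab]
  rcases reachIn_erase_or hab.symm (hconn.2 a v) with h | h | h
  exacts [⟨a, ha, reachIn_symm h⟩, ⟨a, ha, reachIn_symm h⟩, ⟨b, hb, reachIn_symm h⟩]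

lemma exists_isLeaflessSet_subset_compEdges_of_mem_kernelSet (hconn : G.GConn)
    (h2 : ∃ C₁ C₂ : Finset G.E, G.IsCycleSet C₁ ∧ G.IsCycleSet C₂ ∧ C₁ ≠ C₂)
    (he : e ∈ G.kernelSet) (hz : z ∈ G.ends e) :
    ∃ C ⊆ G.compEdges (Finset.univ.erase e) z, C.Nonempty ∧ G.IsLeaflessSet C := by
  obtain ⟨w, hends⟩ := Sym2.mem_iff_exists.mp hz
  have hsub : G.kernelSet.erase e ⊆ Finset.univ.erase e :=
    Finset.erase_subset_erase e (Finset.subset_univ _)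
  by_cases hzw : G.reachIn (Finset.univ.erase e) z w
  · obtain ⟨C, heC, hne, hC⟩ := exists_isLeaflessSet_not_mem h2 e
    refine ⟨C, fun g hg => ?_, hne, hC⟩
    exact mem_compEdges_iff.mpr
      ⟨Finset.mem_erase.mpr ⟨ne_of_mem_of_not_mem hg heC, Finset.mem_univ g⟩,
        _, (G.ends g).out_fst_mem, (reachIn_erase_iff hends hzw).mpr (hconn.2 z _)⟩
  · obtain ⟨C, hC, hne, hleaf⟩ := exists_isLeaflessSet_subset_compEdges_erase
      isLeaflessSet_kernelSet he hends fun h => hzw (reachIn_mono hsub h)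
    exact ⟨C, hC.trans (compEdges_mono hsub z), hne, hleaf⟩

end Kernel

end Multigraph

/-- For a connected graph `A` with at least two cycles, `e ∈ ⌊A⌋` iff every
component of `A \ e` contains a cycle (equivalently, `A \ e` has no tree
component). -/
theorem stmt_13 (A : Multigraph) (hconn : A.GConn)
    (h2 : ∃ C₁ C₂ : Finset A.E, A.IsCycleSet C₁ ∧ A.IsCycleSet C₂ ∧ C₁ ≠ C₂)
    (e : A.E) :
    e ∈ A.kernelSet ↔ ∀ v : A.V, ¬ A.IsTreeCompAt (Finset.univ.erase e) v := by
  constructor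
  · intro he v
    obtain ⟨z, hz, hvz⟩ := hconn.exists_reachIn_erase e v
    rw [Multigraph.not_isTreeCompAt_iff, Multigraph.compEdges_eq_of_reachIn hvz]
    exact Multigraph.exists_isLeaflessSet_subset_compEdges_of_mem_kernelSet hconn h2 he hz
  · intro h
    refine Multigraph.mem_kernelSet_of_isAnchored fun z _ => ?_
    obtain ⟨C, hC, hne, hleaf⟩ := Multigraph.not_isTreeCompAt_iff.mp (h z)
    exact Multigraph.isAnchored_of_subset_compEdges hC hne hleaf
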